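/- For all D₁, D₂ ∈ Λ the following identity holds in Λ: 6·⟨D₁,D₂⟩·(−K) − 6·⟨−K,D₁⟩·D₂ = Σ_{E} ⟨E,D₂⟩·( ⟨−K,D₁⟩·E − ⟨E,D₁⟩·(−K) ), where the sum runs over all line classes E. -/
import Mathlib


/-- The Picard lattice of the cubic surface: free ℤ-module of rank 7
with basis h, e₁, …, e₆ (coordinates: index 0 ↦ coefficient of h,
index i+1 ↦ coefficient of eᵢ). -/
abbrev Lam : Type := Fin 7 → ℤ

/-- The intersection form: ⟨h,h⟩ = 1, ⟨eᵢ,eᵢ⟩ = −1, distinct basis vectors orthogonal. -/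
def ip (x y : Lam) : ℤ := x 0 * y 0 - ∑ i : Fin 6, x i.succ * y i.succ

/-- The canonical class K = −3h + e₁ + ⋯ + e₆. -/
def Kc : Lam := ![-3, 1, 1, 1, 1, 1, 1]

/-- A line class: x with ⟨x,x⟩ = −1 and ⟨x,K⟩ = −1. -/
def IsLine (x : Lam) : Prop := ip x x = -1 ∧ ip x Kc = -1

/-- A fiber class: x with ⟨x,x⟩ = 0 and ⟨x,K⟩ = −2. -/
def IsFiber (x : Lam) : Prop := ip x x = 0 ∧ ip x Kc = -2

def linesList : List Lam :=
  [![0, 1, 0, 0, 0, 0, 0],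
   ![0, 0, 1, 0, 0, 0, 0],
   ![0, 0, 0, 1, 0, 0, 0],
   ![0, 0, 0, 0, 1, 0, 0],
   ![0, 0, 0, 0, 0, 1, 0],
   ![0, 0, 0, 0, 0, 0, 1],
   ![1, -1, -1, 0, 0, 0, 0],
   ![1, -1, 0, -1, 0, 0, 0],
   ![1, -1, 0, 0, -1, 0, 0],
   ![1, -1, 0, 0, 0, -1, 0],
   ![1, -1, 0, 0, 0, 0, -1],
   ![1, 0, -1, -1, 0, 0, 0],
   ![1, 0, -1, 0, -1, 0, 0],
   ![1, 0, -1, 0, 0, -1, 0],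
   ![1, 0, -1, 0, 0, 0, -1],
   ![1, 0, 0, -1, -1, 0, 0],
   ![1, 0, 0, -1, 0, -1, 0],
   ![1, 0, 0, -1, 0, 0, -1],
   ![1, 0, 0, 0, -1, -1, 0],
   ![1, 0, 0, 0, -1, 0, -1],
   ![1, 0, 0, 0, 0, -1, -1],
   ![2, 0, -1, -1, -1, -1, -1],
   ![2, -1, 0, -1, -1, -1, -1],
   ![2, -1, -1, 0, -1, -1, -1],
   ![2, -1, -1, -1, 0, -1, -1],
   ![2, -1, -1, -1, -1, 0, -1],
   ![2, -1, -1, -1, -1, -1, 0]]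

def L27 : Finset Lam := linesList.toFinset

lemma sq_sub_self_nonneg (b : ℤ) : 0 ≤ b * b - b := by
  rcases le_or_gt b 0 with h | h
  · nlinarith
  · have : 1 ≤ b := h
    nlinarith

lemma sq_add_self_nonneg (b : ℤ) : 0 ≤ b * b + b := by
  rcases le_or_gt b (-1) with h | h
  · nlinarith
  · have : 0 ≤ b := by omega
    nlinarith

lemma zero_or_one {b : ℤ} (hle : b * b - b ≤ 0) : b = 0 ∨ b = 1 := by
  have h1 : b * b - b = 0 := le_antisymm hle (sq_sub_self_nonneg b)
  have h2 : b * (b - 1) = 0 := by linear_combination h1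
  rcases mul_eq_zero.mp h2 with h | h
  · exact Or.inl h
  · right; omega

lemma zero_or_negone {b : ℤ} (hle : b * b + b ≤ 0) : b = 0 ∨ b = -1 := by
  have h1 : b * b + b = 0 := le_antisymm hle (sq_add_self_nonneg b)
  have h2 : b * (b + 1) = 0 := by linear_combination h1
  rcases mul_eq_zero.mp h2 with h | h
  · exact Or.inl h
  · right; omega

set_option maxHeartbeats 2000000 in
lemma mem_of_isLine (x : Lam) (hx : IsLine x) : x ∈ L27 := by
  obtain ⟨a0,a1,a2,a3,a4,a5,a6,rfl⟩ : ∃ a0 a1 a2 a3 a4 a5 a6 : ℤ,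
      x = ![a0,a1,a2,a3,a4,a5,a6] :=
    ⟨x 0, x 1, x 2, x 3, x 4, x 5, x 6, by funext i; fin_cases i <;> rfl⟩
  obtain ⟨h1, h2⟩ := hx
  simp only [ip, Kc, Fin.sum_univ_six,
    show (Fin.succ 0 : Fin 7) = 1 from rfl, show (Fin.succ 1 : Fin 7) = 2 from rfl,
    show (Fin.succ 2 : Fin 7) = 3 from rfl, show (Fin.succ 3 : Fin 7) = 4 from rfl,
    show (Fin.succ 4 : Fin 7) = 5 from rfl, show (Fin.succ 5 : Fin 7) = 6 from rfl,
    Matrix.cons_val_zero, Matrix.cons_val_one, Matrix.head_cons,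
    Matrix.cons_val_two, Matrix.cons_val_three, Matrix.cons_val_four,
    Matrix.tail_cons,
    show (![a0,a1,a2,a3,a4,a5,a6] : Lam) 5 = a5 from rfl,
    show (![a0,a1,a2,a3,a4,a5,a6] : Lam) 6 = a6 from rfl,
    show (![(-3:ℤ),1,1,1,1,1,1] : Lam) 5 = 1 from rfl,
    show (![(-3:ℤ),1,1,1,1,1,1] : Lam) 6 = 1 from rfl] at h1 h2
  have hS2 : (a1+a2+a3+a4+a5+a6) * (a1+a2+a3+a4+a5+a6) = (1-3*a0)*(1-3*a0) := by
    have h : a1+a2+a3+a4+a5+a6 = 1-3*a0 := by linarith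
    rw [h]
  have key : 3*a0*a0 - 6*a0 - 5 ≤ 0 := by linarith [sq_nonneg (a1-a2), sq_nonneg (a1-a3), sq_nonneg (a1-a4), sq_nonneg (a1-a5), sq_nonneg (a1-a6), sq_nonneg (a2-a3), sq_nonneg (a2-a4), sq_nonneg (a2-a5), sq_nonneg (a2-a6), sq_nonneg (a3-a4), sq_nonneg (a3-a5), sq_nonneg (a3-a6), sq_nonneg (a4-a5), sq_nonneg (a4-a6), sq_nonneg (a5-a6), hS2, h1]
  have hub : a0 ≤ 2 := by nlinarith [key]
  have hlb : 0 ≤ a0 := by nlinarith [key]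
  have m1 : (![0, 1, 0, 0, 0, 0, 0] : Lam) ∈ L27 := List.mem_toFinset.mpr (by decide)
  have m2 : (![0, 0, 1, 0, 0, 0, 0] : Lam) ∈ L27 := List.mem_toFinset.mpr (by decide)
  have m3 : (![0, 0, 0, 1, 0, 0, 0] : Lam) ∈ L27 := List.mem_toFinset.mpr (by decide)
  have m4 : (![0, 0, 0, 0, 1, 0, 0] : Lam) ∈ L27 := List.mem_toFinset.mpr (by decide)
  have m5 : (![0, 0, 0, 0, 0, 1, 0] : Lam) ∈ L27 := List.mem_toFinset.mpr (by decide)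
  have m6 : (![0, 0, 0, 0, 0, 0, 1] : Lam) ∈ L27 := List.mem_toFinset.mpr (by decide)
  have m7 : (![1, -1, -1, 0, 0, 0, 0] : Lam) ∈ L27 := List.mem_toFinset.mpr (by decide)
  have m8 : (![1, -1, 0, -1, 0, 0, 0] : Lam) ∈ L27 := List.mem_toFinset.mpr (by decide)
  have m9 : (![1, -1, 0, 0, -1, 0, 0] : Lam) ∈ L27 := List.mem_toFinset.mpr (by decide)
  have m10 : (![1, -1, 0, 0, 0, -1, 0] : Lam) ∈ L27 := List.mem_toFinset.mpr (by decide)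
  have m11 : (![1, -1, 0, 0, 0, 0, -1] : Lam) ∈ L27 := List.mem_toFinset.mpr (by decide)
  have m12 : (![1, 0, -1, -1, 0, 0, 0] : Lam) ∈ L27 := List.mem_toFinset.mpr (by decide)
  have m13 : (![1, 0, -1, 0, -1, 0, 0] : Lam) ∈ L27 := List.mem_toFinset.mpr (by decide)
  have m14 : (![1, 0, -1, 0, 0, -1, 0] : Lam) ∈ L27 := List.mem_toFinset.mpr (by decide)
  have m15 : (![1, 0, -1, 0, 0, 0, -1] : Lam) ∈ L27 := List.mem_toFinset.mpr (by decide)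
  have m16 : (![1, 0, 0, -1, -1, 0, 0] : Lam) ∈ L27 := List.mem_toFinset.mpr (by decide)
  have m17 : (![1, 0, 0, -1, 0, -1, 0] : Lam) ∈ L27 := List.mem_toFinset.mpr (by decide)
  have m18 : (![1, 0, 0, -1, 0, 0, -1] : Lam) ∈ L27 := List.mem_toFinset.mpr (by decide)
  have m19 : (![1, 0, 0, 0, -1, -1, 0] : Lam) ∈ L27 := List.mem_toFinset.mpr (by decide)
  have m20 : (![1, 0, 0, 0, -1, 0, -1] : Lam) ∈ L27 := List.mem_toFinset.mpr (by decide)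
  have m21 : (![1, 0, 0, 0, 0, -1, -1] : Lam) ∈ L27 := List.mem_toFinset.mpr (by decide)
  have m22 : (![2, 0, -1, -1, -1, -1, -1] : Lam) ∈ L27 := List.mem_toFinset.mpr (by decide)
  have m23 : (![2, -1, 0, -1, -1, -1, -1] : Lam) ∈ L27 := List.mem_toFinset.mpr (by decide)
  have m24 : (![2, -1, -1, 0, -1, -1, -1] : Lam) ∈ L27 := List.mem_toFinset.mpr (by decide)
  have m25 : (![2, -1, -1, -1, 0, -1, -1] : Lam) ∈ L27 := List.mem_toFinset.mpr (by decide)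
  have m26 : (![2, -1, -1, -1, -1, 0, -1] : Lam) ∈ L27 := List.mem_toFinset.mpr (by decide)
  have m27 : (![2, -1, -1, -1, -1, -1, 0] : Lam) ∈ L27 := List.mem_toFinset.mpr (by decide)
  interval_cases a0
  · -- a0 = 0
    have d1 : a1 = 0 ∨ a1 = 1 := zero_or_one (by linarith [sq_sub_self_nonneg a2, sq_sub_self_nonneg a3, sq_sub_self_nonneg a4, sq_sub_self_nonneg a5, sq_sub_self_nonneg a6])
    have d2 : a2 = 0 ∨ a2 = 1 := zero_or_one (by linarith [sq_sub_self_nonneg a1, sq_sub_self_nonneg a3, sq_sub_self_nonneg a4, sq_sub_self_nonneg a5, sq_sub_self_nonneg a6])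
    have d3 : a3 = 0 ∨ a3 = 1 := zero_or_one (by linarith [sq_sub_self_nonneg a1, sq_sub_self_nonneg a2, sq_sub_self_nonneg a4, sq_sub_self_nonneg a5, sq_sub_self_nonneg a6])
    have d4 : a4 = 0 ∨ a4 = 1 := zero_or_one (by linarith [sq_sub_self_nonneg a1, sq_sub_self_nonneg a2, sq_sub_self_nonneg a3, sq_sub_self_nonneg a5, sq_sub_self_nonneg a6])
    have d5 : a5 = 0 ∨ a5 = 1 := zero_or_one (by linarith [sq_sub_self_nonneg a1, sq_sub_self_nonneg a2, sq_sub_self_nonneg a3, sq_sub_self_nonneg a4, sq_sub_self_nonneg a6])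
    have d6 : a6 = 0 ∨ a6 = 1 := zero_or_one (by linarith [sq_sub_self_nonneg a1, sq_sub_self_nonneg a2, sq_sub_self_nonneg a3, sq_sub_self_nonneg a4, sq_sub_self_nonneg a5])
    rcases d1 with rfl|rfl <;> rcases d2 with rfl|rfl <;> rcases d3 with rfl|rfl <;>
      rcases d4 with rfl|rfl <;> rcases d5 with rfl|rfl <;> rcases d6 with rfl|rfl <;>
      first | omega | exact m1 | exact m2 | exact m3 | exact m4 | exact m5 | exact m6 | exact m7 | exact m8 | exact m9 | exact m10 | exact m11 | exact m12 | exact m13 | exact m14 | exact m15 | exact m16 | exact m17 | exact m18 | exact m19 | exact m20 | exact m21 | exact m22 | exact m23 | exact m24 | exact m25 | exact m26 | exact m27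
  · -- a0 = 1
    have d1 : a1 = 0 ∨ a1 = -1 := zero_or_negone (by linarith [sq_add_self_nonneg a2, sq_add_self_nonneg a3, sq_add_self_nonneg a4, sq_add_self_nonneg a5, sq_add_self_nonneg a6])
    have d2 : a2 = 0 ∨ a2 = -1 := zero_or_negone (by linarith [sq_add_self_nonneg a1, sq_add_self_nonneg a3, sq_add_self_nonneg a4, sq_add_self_nonneg a5, sq_add_self_nonneg a6])
    have d3 : a3 = 0 ∨ a3 = -1 := zero_or_negone (by linarith [sq_add_self_nonneg a1, sq_add_self_nonneg a2, sq_add_self_nonneg a4, sq_add_self_nonneg a5, sq_add_self_nonneg a6])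
    have d4 : a4 = 0 ∨ a4 = -1 := zero_or_negone (by linarith [sq_add_self_nonneg a1, sq_add_self_nonneg a2, sq_add_self_nonneg a3, sq_add_self_nonneg a5, sq_add_self_nonneg a6])
    have d5 : a5 = 0 ∨ a5 = -1 := zero_or_negone (by linarith [sq_add_self_nonneg a1, sq_add_self_nonneg a2, sq_add_self_nonneg a3, sq_add_self_nonneg a4, sq_add_self_nonneg a6])
    have d6 : a6 = 0 ∨ a6 = -1 := zero_or_negone (by linarith [sq_add_self_nonneg a1, sq_add_self_nonneg a2, sq_add_self_nonneg a3, sq_add_self_nonneg a4, sq_add_self_nonneg a5])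
    rcases d1 with rfl|rfl <;> rcases d2 with rfl|rfl <;> rcases d3 with rfl|rfl <;>
      rcases d4 with rfl|rfl <;> rcases d5 with rfl|rfl <;> rcases d6 with rfl|rfl <;>
      first | omega | exact m1 | exact m2 | exact m3 | exact m4 | exact m5 | exact m6 | exact m7 | exact m8 | exact m9 | exact m10 | exact m11 | exact m12 | exact m13 | exact m14 | exact m15 | exact m16 | exact m17 | exact m18 | exact m19 | exact m20 | exact m21 | exact m22 | exact m23 | exact m24 | exact m25 | exact m26 | exact m27
  · -- a0 = 2
    have d1 : a1 = 0 ∨ a1 = -1 := zero_or_negone (by linarith [sq_add_self_nonneg a2, sq_add_self_nonneg a3, sq_add_self_nonneg a4, sq_add_self_nonneg a5, sq_add_self_nonneg a6])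
    have d2 : a2 = 0 ∨ a2 = -1 := zero_or_negone (by linarith [sq_add_self_nonneg a1, sq_add_self_nonneg a3, sq_add_self_nonneg a4, sq_add_self_nonneg a5, sq_add_self_nonneg a6])
    have d3 : a3 = 0 ∨ a3 = -1 := zero_or_negone (by linarith [sq_add_self_nonneg a1, sq_add_self_nonneg a2, sq_add_self_nonneg a4, sq_add_self_nonneg a5, sq_add_self_nonneg a6])
    have d4 : a4 = 0 ∨ a4 = -1 := zero_or_negone (by linarith [sq_add_self_nonneg a1, sq_add_self_nonneg a2, sq_add_self_nonneg a3, sq_add_self_nonneg a5, sq_add_self_nonneg a6])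
    have d5 : a5 = 0 ∨ a5 = -1 := zero_or_negone (by linarith [sq_add_self_nonneg a1, sq_add_self_nonneg a2, sq_add_self_nonneg a3, sq_add_self_nonneg a4, sq_add_self_nonneg a6])
    have d6 : a6 = 0 ∨ a6 = -1 := zero_or_negone (by linarith [sq_add_self_nonneg a1, sq_add_self_nonneg a2, sq_add_self_nonneg a3, sq_add_self_nonneg a4, sq_add_self_nonneg a5])
    rcases d1 with rfl|rfl <;> rcases d2 with rfl|rfl <;> rcases d3 with rfl|rfl <;>
      rcases d4 with rfl|rfl <;> rcases d5 with rfl|rfl <;> rcases d6 with rfl|rfl <;>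
      first | omega | exact m1 | exact m2 | exact m3 | exact m4 | exact m5 | exact m6 | exact m7 | exact m8 | exact m9 | exact m10 | exact m11 | exact m12 | exact m13 | exact m14 | exact m15 | exact m16 | exact m17 | exact m18 | exact m19 | exact m20 | exact m21 | exact m22 | exact m23 | exact m24 | exact m25 | exact m26 | exact m27

lemma cons_val_five' (c0 c1 c2 c3 c4 c5 c6 : ℤ) : (![c0,c1,c2,c3,c4,c5,c6] : Lam) 5 = c5 := rfl

lemma cons_val_six' (c0 c1 c2 c3 c4 c5 c6 : ℤ) : (![c0,c1,c2,c3,c4,c5,c6] : Lam) 6 = c6 := rfl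

lemma ip_expand (x y : Lam) : ip x y =
    x 0 * y 0 - (x 1 * y 1 + x 2 * y 2 + x 3 * y 3 + x 4 * y 4 + x 5 * y 5 + x 6 * y 6) := by
  simp only [ip, Fin.sum_univ_six, show (Fin.succ 0 : Fin 7) = 1 from rfl, show (Fin.succ 1 : Fin 7) = 2 from rfl, show (Fin.succ 2 : Fin 7) = 3 from rfl, show (Fin.succ 3 : Fin 7) = 4 from rfl, show (Fin.succ 4 : Fin 7) = 5 from rfl, show (Fin.succ 5 : Fin 7) = 6 from rfl]

lemma lines_set_eq : {E : Lam | IsLine E} = (L27 : Set Lam) := by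
  ext x
  simp only [Set.mem_setOf_eq, Finset.mem_coe]
  constructor
  · exact mem_of_isLine x
  · intro h
    have hx : x ∈ linesList := List.mem_toFinset.mp h
    fin_cases hx <;> exact ⟨by decide, by decide⟩

lemma linesList_nodup : linesList.Nodup := by decide

set_option maxHeartbeats 2000000 in
/-- For all D₁, D₂ ∈ Λ:
6⟨D₁,D₂⟩(−K) − 6⟨−K,D₁⟩D₂ = Σ_{E line} ⟨E,D₂⟩·(⟨−K,D₁⟩·E − ⟨E,D₁⟩·(−K)). -/
theorem anticanonical_identity :
    {E : Lam | IsLine E}.Finite ∧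
    ∀ D₁ D₂ : Lam,
      (6 * ip D₁ D₂) • (-Kc) - (6 * ip (-Kc) D₁) • D₂ =
      ∑ᶠ E ∈ {E : Lam | IsLine E},
        ip E D₂ • (ip (-Kc) D₁ • E - ip E D₁ • (-Kc)) := by
  constructor
  · rw [lines_set_eq]; exact L27.finite_toSet
  · intro D₁ D₂
    rw [lines_set_eq, finsum_mem_coe_finset]
    rw [show (L27 : Finset Lam) = linesList.toFinset from rfl,
      List.sum_toFinset _ linesList_nodup]
    simp only [linesList, List.map_cons, List.map_nil, List.sum_cons, List.sum_nil]
    funext i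
    fin_cases i <;>
      (simp only [show ((⟨0, by norm_num⟩ : Fin 7)) = (0 : Fin 7) from rfl, show ((⟨1, by norm_num⟩ : Fin 7)) = (1 : Fin 7) from rfl, show ((⟨2, by norm_num⟩ : Fin 7)) = (2 : Fin 7) from rfl, show ((⟨3, by norm_num⟩ : Fin 7)) = (3 : Fin 7) from rfl, show ((⟨4, by norm_num⟩ : Fin 7)) = (4 : Fin 7) from rfl, show ((⟨5, by norm_num⟩ : Fin 7)) = (5 : Fin 7) from rfl, show ((⟨6, by norm_num⟩ : Fin 7)) = (6 : Fin 7) from rfl]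
       simp only [ip_expand, Kc, Pi.smul_apply, Pi.sub_apply, Pi.neg_apply, Pi.add_apply,
         Pi.zero_apply, smul_eq_mul, add_zero,
         Matrix.cons_val_zero, Matrix.cons_val_one, Matrix.cons_val_two, Matrix.cons_val_three,
         Matrix.cons_val_four, cons_val_five', cons_val_six', Matrix.head_cons, Matrix.tail_cons]
       ring)
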